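/- arXiv:math/0110029 — 2 statements merged into one kernel-verified Lean document; each statement's English description precedes it below -/
import Mathlib

section
/- For every Schwartz function η : ℝ → ℝ, the Shannon kernels form a delta sequence as the grid spacing tends to zero: lim_{Δ → 0⁺} ∫_{-∞}^{∞} (sin(πx/Δ)/(πx)) · η(x) dx = η(0). -/
open Real MeasureTheory Filter Topology FourierTransform

/-! `sin (2πRx) / (πx)` is the Fourier transform of the indicator of `[-R, R]`, so by the
self-adjointness of the Fourier transform, pairing it with `η` gives `∫_{-R}^{R} 𝓕 η`. As
`R = 1 / (2Δ) → ∞` this tends to `∫ 𝓕 η`, which is `η 0` by Fourier inversion. -/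

section

variable {V E : Type*} [NormedAddCommGroup V] [InnerProductSpace ℝ V] [FiniteDimensional ℝ V]
  [MeasurableSpace V] [BorelSpace V] [NormedAddCommGroup E] [NormedSpace ℂ E] [CompleteSpace E]

theorem Real.integral_fourier_smul_eq {f : V → ℂ} {g : V → E} (hf : Integrable f)
    (hg : Integrable g) : ∫ ξ, 𝓕 f ξ • g ξ = ∫ x, f x • 𝓕 g x := by
  simpa using! VectorFourier.integral_fourierIntegral_smul_eq_flip (L := innerₗ V)
    Real.continuous_fourierChar continuous_inner hf hg

theorem Real.integral_fourier_eq_apply_zero {f : V → E} (hf : Integrable f)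
    (hFf : Integrable (𝓕 f)) (h0 : ContinuousAt f 0) : ∫ ξ, 𝓕 f ξ = f 0 := by
  simpa [Real.fourierInv_eq] using hf.fourierInv_fourier_eq hFf h0

theorem Real.fourier_indicator_Ioc {R x : ℝ} (hR : 0 ≤ R) (hx : x ≠ 0) :
    𝓕 ((Set.Ioc (-R) R).indicator (1 : ℝ → ℂ)) x = ((sin (2 * π * R * x) / (π * x) : ℝ) : ℂ) := by
  set c : ℂ := ↑(-2 * π * x) * Complex.I
  have hc : c ≠ 0 := by simp [c, hx, pi_ne_zero]
  have h_integrand : ∀ v : ℝ, Complex.exp (↑(-2 * π * v * x) * Complex.I) •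
      (Set.Ioc (-R) R).indicator (1 : ℝ → ℂ) v
        = (Set.Ioc (-R) R).indicator (fun v : ℝ => Complex.exp (c * v)) v := by
    intro v
    by_cases hv : v ∈ Set.Ioc (-R) R
    · simp only [Set.indicator_of_mem hv, Pi.one_apply, smul_eq_mul, mul_one, c]
      push_cast; ring_nf
    · simp [hv]
  rw [Real.fourier_real_eq_integral_exp_smul]
  simp_rw [h_integrand]
  rw [integral_indicator measurableSet_Ioc, ← intervalIntegral.integral_of_le (by linarith),
    integral_exp_mul_complex hc, Complex.ofReal_div, Complex.ofReal_sin, Complex.sin]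
  have hπ : (π : ℂ) ≠ 0 := by exact_mod_cast pi_ne_zero
  have hxc : (x : ℂ) ≠ 0 := by exact_mod_cast hx
  simp only [c]
  push_cast
  field_simp
  ring_nf
  simp [Complex.I_sq]

theorem integral_sin_div_mul_eq_intervalIntegral_fourier {g : ℝ → ℂ} (hg : Integrable g)
    {R : ℝ} (hR : 0 ≤ R) :
    ∫ x, ((sin (2 * π * R * x) / (π * x) : ℝ) : ℂ) * g x = ∫ ξ in -R..R, 𝓕 g ξ := by
  have h_ind : Integrable ((Set.Ioc (-R) R).indicator (1 : ℝ → ℂ)) :=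
    (integrable_indicator_iff measurableSet_Ioc).2 (integrableOn_const measure_Ioc_lt_top.ne)
  calc ∫ x, ((sin (2 * π * R * x) / (π * x) : ℝ) : ℂ) * g x
      = ∫ x, 𝓕 ((Set.Ioc (-R) R).indicator (1 : ℝ → ℂ)) x • g x := by
        refine integral_congr_ae ?_
        filter_upwards [compl_mem_ae_iff.2 (measure_singleton (μ := volume) (0 : ℝ))] with x hx
        rw [Real.fourier_indicator_Ioc hR hx, smul_eq_mul]
    _ = ∫ ξ, (Set.Ioc (-R) R).indicator (1 : ℝ → ℂ) ξ • 𝓕 g ξ :=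
        Real.integral_fourier_smul_eq h_ind hg
    _ = ∫ ξ in -R..R, 𝓕 g ξ := by
        simp_rw [← Set.indicator_smul_apply_left, Pi.one_apply, one_smul]
        rw [integral_indicator measurableSet_Ioc, intervalIntegral.integral_of_le (by linarith)]

theorem tendsto_integral_sin_div_mul {g : ℝ → ℂ} (hg : Integrable g) (hFg : Integrable (𝓕 g))
    (h0 : ContinuousAt g 0) :
    Tendsto (fun R => ∫ x, ((sin (2 * π * R * x) / (π * x) : ℝ) : ℂ) * g x) atTop (𝓝 (g 0)) := by
  rw [← Real.integral_fourier_eq_apply_zero hg hFg h0]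
  refine (intervalIntegral_tendsto_integral hFg tendsto_neg_atTop_atBot tendsto_id).congr' ?_
  filter_upwards [eventually_ge_atTop 0] with R hR
  exact (integral_sin_div_mul_eq_intervalIntegral_fourier hg hR).symm

theorem tendsto_integral_sin_div_mul_of_real {g : ℝ → ℝ} (hg : Integrable g)
    (hFg : Integrable (𝓕 (fun x => (g x : ℂ)))) (h0 : ContinuousAt g 0) :
    Tendsto (fun R => ∫ x, sin (2 * π * R * x) / (π * x) * g x) atTop (𝓝 (g 0)) := by
  rw [← tendsto_ofReal_iff]
  simp_rw [← integral_complex_ofReal, Complex.ofReal_mul]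
  exact tendsto_integral_sin_div_mul hg.ofReal hFg (Complex.continuous_ofReal.continuousAt.comp h0)

/-- Shannon's delta kernels `x ↦ sin(πx/Δ)/(πx)` form a delta sequence as the
grid spacing `Δ` tends to zero: tested against any Schwartz function `η`,
the integral converges to `η 0`. -/
theorem shannon_kernel_delta_sequence (η : SchwartzMap ℝ ℝ) :
    Tendsto (fun Δ : ℝ => ∫ x : ℝ, (Real.sin (π * x / Δ) / (π * x)) * η x)
      (𝓝[>] (0 : ℝ)) (𝓝 (η 0)) := by
  have h_fourier : Integrable (𝓕 (fun x => (η x : ℂ))) :=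
    (𝓕 (η.postcompCLM Complex.ofRealCLM)).integrable
  have h_bandwidth : Tendsto (fun Δ : ℝ => 2⁻¹ * Δ⁻¹) (𝓝[>] 0) atTop :=
    tendsto_inv_nhdsGT_zero.const_mul_atTop (by norm_num)
  refine ((tendsto_integral_sin_div_mul_of_real η.integrable h_fourier
    η.continuous.continuousAt).comp h_bandwidth).congr fun Δ => ?_
  simp only [Function.comp_apply]
  congr! 5
  ring
end
end

section
/- For fixed window width σ > 0, the (unnormalized) regularized Shannon kernels form a delta sequence as the grid spacing tends to zero: for every Schwartz function η : ℝ → ℝ, lim_{Δ → 0⁺} ∫_{-∞}^{∞} (sin(πx/Δ)/(πx)) · exp(−x²/(2σ²)) · η(x) dx = η(0). -/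
/-!
Since `2T sinc(2πTx) = ∫_{-T}^{T} e^{-2πixw} dw`, Fubini gives
`∫ 2T sinc(2πTx) f(x) dx = ∫_{-T}^{T} 𝓕 f`, which tends to `𝓕⁻ (𝓕 f) 0 = f 0` by Fourier
inversion whenever `𝓕 f` is integrable; this covers the Gaussian window. For the test function
write `η x = η 0 + x * slope η 0 x`: the factor `x` cancels the `1 / x` of the kernel and leaves
`sin (2πTx)` against the integrable function `G x * slope η 0 x / π` (the slope is bounded because
`η` is Lipschitz), which tends to zero by Riemann–Lebesgue. The kernel of the theorem is
`2T sinc(2πTx)` with `T = 1 / (2Δ)`.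
-/

open Real MeasureTheory Filter Topology
open scoped FourierTransform NNReal SchwartzMap

theorem mul_sinc (x : ℝ) : x * sinc x = sin x := by
  rcases eq_or_ne x 0 with rfl | hx
  · simp
  · rw [sinc_of_ne_zero hx, mul_div_cancel₀ _ hx]

open Complex in
theorem integral_cexp_neg_two_pi_mul_I_eq_sinc (x T : ℝ) :
    ∫ w in (-T)..T, cexp (↑(-2 * π * x * w) * I) = 2 * T * sinc (2 * π * T * x) := by
  rcases eq_or_ne x 0 with rfl | hx
  · simp only [mul_zero, zero_mul, ofReal_zero, Complex.exp_zero, intervalIntegral.integral_const,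
      sub_neg_eq_add, real_smul, ofReal_add, mul_one, sinc_zero, ofReal_one]
    ring
  have hc : -2 * π * x ≠ 0 := by simp [hx, pi_ne_zero]
  have hsubst :=
    intervalIntegral.integral_comp_mul_left (fun w : ℝ => cexp (w * I)) hc (a := -T) (b := T)
  simp only [ofReal_mul] at hsubst ⊢
  rw [hsubst, mul_neg, integral_exp_mul_I_eq_sinc, ← sinc_neg]
  simp only [Complex.real_smul]
  have hx' : (x : ℂ) ≠ 0 := by exact_mod_cast hx
  push_cast
  field_simp

section Fourier

variable {E : Type*} [NormedAddCommGroup E] [NormedSpace ℂ E] [CompleteSpace E] {f : ℝ → E}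

theorem intervalIntegral_fourier_eq_integral_sinc_smul (hf : Integrable f) (T : ℝ) :
    ∫ w in (-T)..T, 𝓕 f w = ∫ x, (2 * T * sinc (2 * π * T * x)) • f x := by
  have hint : Integrable
      (Function.uncurry fun w x => Complex.exp (↑(-2 * π * x * w) * Complex.I) • f x)
      ((volume.restrict (Set.uIoc (-T) T)).prod volume) := by
    have : IsFiniteMeasure (volume.restrict (Set.uIoc (-T) T)) :=
      isFiniteMeasure_restrict.2 (by simp [Set.uIoc])
    refine ((integrable_const (1 : ℝ)).mul_prod hf.norm).mono'
      ((Continuous.aestronglyMeasurable (by fun_prop)).smul hf.aestronglyMeasurable.comp_snd) ?_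
    filter_upwards with ⟨w, x⟩
    simp only [Function.uncurry_apply_pair, norm_smul, Complex.norm_exp_ofReal_mul_I, one_mul,
      le_refl]
  simp_rw [Real.fourier_real_eq_integral_exp_smul]
  rw [intervalIntegral_integral_swap hint]
  simp_rw [intervalIntegral.integral_smul_const, integral_cexp_neg_two_pi_mul_I_eq_sinc]
  congr with x
  rw [← Complex.coe_smul]
  push_cast
  rfl

theorem tendsto_integral_sinc_smul (hf : Integrable f) (hFf : Integrable (𝓕 f))
    (hf0 : ContinuousAt f 0) :
    Tendsto (fun T : ℝ => ∫ x, (2 * T * sinc (2 * π * T * x)) • f x) atTop (𝓝 (f 0)) := by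
  have hlim := intervalIntegral_tendsto_integral hFf tendsto_neg_atTop_atBot tendsto_id
  have hinv : ∫ w, 𝓕 f w = f 0 := by
    simpa [Real.fourierInv_eq'] using hf.fourierInv_fourier_eq hFf hf0
  simp_rw [← intervalIntegral_fourier_eq_integral_sinc_smul hf, ← hinv]
  exact hlim

end Fourier

open Complex in
theorem integrable_fourier_cexp_neg_mul_sq {b : ℂ} (hb : 0 < b.re) :
    Integrable (𝓕 fun x : ℝ => cexp (-b * x ^ 2)) := by
  have hπ : (π : ℂ) ≠ 0 := ofReal_ne_zero.2 pi_ne_zero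
  have hb' : 0 < (b / π).re := by simpa [Complex.div_ofReal_re] using div_pos hb pi_pos
  have hb'' : 0 < (π / (b / π)).re := by
    have hne : b / π ≠ 0 := fun h => by simp [h] at hb'
    rw [div_eq_mul_inv, re_ofReal_mul, inv_re]
    exact mul_pos pi_pos (div_pos hb' (normSq_pos.2 hne))
  have hgauss : (fun x : ℝ => cexp (-b * x ^ 2)) = fun x : ℝ => cexp (-π * (b / π) * x ^ 2) := by
    ext x; congr 2; field_simp
  rw [hgauss, fourier_gaussian_pi hb']
  simp_rw [neg_div]
  exact (integrable_cexp_neg_mul_sq hb'').const_mul _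

theorem tendsto_integral_sinc_mul_exp_neg_mul_sq {b : ℝ} (hb : 0 < b) :
    Tendsto (fun T : ℝ => ∫ x, 2 * T * sinc (2 * π * T * x) * exp (-b * x ^ 2)) atTop (𝓝 1) := by
  have hb' : 0 < (b : ℂ).re := by simpa using hb
  have h := tendsto_integral_sinc_smul (integrable_cexp_neg_mul_sq hb')
    (integrable_fourier_cexp_neg_mul_sq hb') (by fun_prop)
  rw [← tendsto_ofReal_iff]
  convert h using 2 with T
  · rw [← integral_complex_ofReal]
    congr with x
    rw [Complex.real_smul]
    push_cast
    ring
  · simp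

theorem tendsto_integral_sin_mul {h : ℝ → ℝ} (hh : Integrable h) :
    Tendsto (fun T : ℝ => ∫ x, sin (2 * π * T * x) * h x) atTop (𝓝 0) := by
  have hRL := ((Complex.continuous_im.tendsto 0).comp
    ((Real.zero_at_infty_fourier fun x => (h x : ℂ)).mono_left atTop_le_cocompact)).neg
  rw [Complex.zero_im, neg_zero] at hRL
  refine hRL.congr fun T => ?_
  have hint : Integrable fun x : ℝ => Complex.exp (↑(-2 * π * x * T) * Complex.I) • (h x : ℂ) :=
    hh.ofReal.bdd_mul (c := 1) (by fun_prop)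
      (.of_forall fun x => (Complex.norm_exp_ofReal_mul_I _).le)
  have him := integral_im hint
  simp only [RCLike.im_to_complex] at him
  rw [Function.comp_apply, Real.fourier_real_eq_integral_exp_smul, ← him, ← integral_neg]
  congr with x
  rw [smul_eq_mul, Complex.mul_im, Complex.exp_ofReal_mul_I_re, Complex.exp_ofReal_mul_I_im,
    Complex.ofReal_re, Complex.ofReal_im, mul_zero, zero_add, ← neg_mul, ← Real.sin_neg]
  ring_nf

theorem LipschitzWith.norm_slope_le {F : Type*} [NormedAddCommGroup F] [NormedSpace ℝ F]
    {K : ℝ≥0} {f : ℝ → F} (hf : LipschitzWith K f) (a b : ℝ) : ‖slope f a b‖ ≤ K := by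
  rcases eq_or_ne b a with rfl | hab
  · simp
  rw [slope, vsub_eq_sub, norm_smul, norm_inv, ← dist_eq_norm, ← dist_eq_norm,
    inv_mul_le_iff₀ (dist_pos.2 hab), mul_comm]
  exact hf.dist_le_mul b a

theorem SchwartzMap.lipschitzWith_seminorm {E F : Type*} [NormedAddCommGroup E] [NormedSpace ℝ E]
    [NormedAddCommGroup F] [NormedSpace ℝ F] (f : 𝓢(E, F)) :
    LipschitzWith (SchwartzMap.seminorm ℝ 0 1 f).toNNReal f := by
  refine lipschitzWith_of_nnnorm_fderiv_le f.differentiable fun x => ?_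
  rw [← NNReal.coe_le_coe, coe_nnnorm, Real.coe_toNNReal _ (apply_nonneg _ _),
    ← norm_iteratedFDeriv_one]
  exact SchwartzMap.norm_iteratedFDeriv_le_seminorm ℝ f 1 x

theorem tendsto_integral_sinc_mul_mul {G φ : ℝ → ℝ} {K : ℝ≥0} {c : ℝ} (hG : Integrable G)
    (hGc : Tendsto (fun T : ℝ => ∫ x, 2 * T * sinc (2 * π * T * x) * G x) atTop (𝓝 c))
    (hφ : LipschitzWith K φ) :
    Tendsto (fun T : ℝ => ∫ x, 2 * T * sinc (2 * π * T * x) * G x * φ x) atTop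
      (𝓝 (c * φ 0)) := by
  have hslope : Integrable fun x => G x * slope φ 0 x :=
    hG.mul_bdd (c := K) (by
      rw [funext (slope_def_field φ 0)]
      exact ((hφ.continuous.measurable.sub_const _).div
        (measurable_id.sub_const _)).aestronglyMeasurable)
      (.of_forall (hφ.norm_slope_le 0))
  have hlim := (hGc.const_mul (φ 0)).add ((tendsto_integral_sin_mul hslope).const_mul π⁻¹)
  rw [mul_zero, add_zero, mul_comm (φ 0)] at hlim
  refine hlim.congr fun T => ?_
  have hkernel : Integrable fun x => 2 * T * sinc (2 * π * T * x) * G x :=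
    hG.bdd_mul (c := |2 * T|) (by fun_prop) (.of_forall fun x => by
      simpa [abs_mul] using
        mul_le_mul_of_nonneg_left (abs_sinc_le_one (2 * π * T * x)) (abs_nonneg (2 * T)))
  rw [← integral_const_mul, ← integral_const_mul, ← integral_add (hkernel.const_mul _)
    ((hslope.bdd_mul (c := 1) (by fun_prop) (.of_forall fun x => abs_sin_le_one _)).const_mul _)]
  congr with x
  have hφx : φ x = φ 0 + x * slope φ 0 x := by
    simpa [sub_eq_iff_eq_add'] using (sub_smul_slope φ 0 x).symm
  have hsin := mul_sinc (2 * π * T * x)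
  rw [hφx, ← hsin]
  field_simp

/-- For fixed window width `σ > 0`, the (unnormalized) regularized Shannon
kernels form a delta sequence as the grid spacing `Δ` tends to zero:
tested against any Schwartz function `η`, the integral converges to `η 0`. -/
theorem regShannon_delta_sequence (σ : ℝ) (hσ : 0 < σ) (η : SchwartzMap ℝ ℝ) :
    Tendsto
      (fun Δ : ℝ =>
        ∫ x : ℝ,
          (Real.sin (π * x / Δ) / (π * x)) * Real.exp (-(x ^ 2) / (2 * σ ^ 2)) * η x)
      (𝓝[>] (0 : ℝ)) (𝓝 (η 0)) := by
  have hb : 0 < (2 * σ ^ 2)⁻¹ := by positivity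
  have hspacing : Tendsto (fun Δ : ℝ => (2 * Δ)⁻¹) (𝓝[>] 0) atTop := by
    simpa only [mul_inv] using tendsto_inv_nhdsGT_zero.const_mul_atTop (inv_pos.2 two_pos)
  have hlim := (tendsto_integral_sinc_mul_mul (integrable_exp_neg_mul_sq hb)
    (tendsto_integral_sinc_mul_exp_neg_mul_sq hb) η.lipschitzWith_seminorm).comp hspacing
  rw [one_mul] at hlim
  refine hlim.congr' ?_
  filter_upwards [self_mem_nhdsWithin] with Δ (hΔ : 0 < Δ)
  refine integral_congr_ae ?_
  -- At `x = 0` the theorem's kernel is `0 / 0 = 0` while `2T sinc 0 = 2T`: agree only a.e.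
  filter_upwards [compl_mem_ae_iff.2 (measure_singleton (0 : ℝ))] with x (hx : x ≠ 0)
  have harg : 2 * π * (2 * Δ)⁻¹ * x = π * x / Δ := by field_simp
  rw [harg, sinc_of_ne_zero (by positivity)]
  field_simp
end
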